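/- arXiv:0808.2997 — 10 statements merged into one kernel-verified Lean document; each statement's English description precedes it below -/
import Mathlib

section
/- Let V be a vector space over a field K of characteristic zero and let A, B, E be linear endomorphisms of V satisfying AB - BA = E, AE + EA = A, BE + EB = B, and E² = E. Then the operators e := A², f := -B², h := -(AB + BA) satisfy the sl₂ relations [h,e] = 2e, [h,f] = -2f, [e,f] = h. -/
theorem stmt_0 (K : Type*) [Field K] [CharZero K]
    (V : Type*) [AddCommGroup V] [Module K V]
    (A B E : Module.End K V)
    (h1 : A * B - B * A = E) (h2 : A * E + E * A = A)
    (h3 : B * E + E * B = B) (h4 : E * E = E) :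
    (-(A * B + B * A)) * A ^ 2 - A ^ 2 * (-(A * B + B * A)) = 2 • (A ^ 2) ∧
    (-(A * B + B * A)) * (-(B ^ 2)) - (-(B ^ 2)) * (-(A * B + B * A)) = (-2 : ℤ) • (-(B ^ 2)) ∧
    A ^ 2 * (-(B ^ 2)) - (-(B ^ 2)) * A ^ 2 = -(A * B + B * A) := by
  have k1 : A ^ 2 * B - B * A ^ 2 = A := by
    have e1 : A * (A * B - B * A) = A * E := by rw [h1]
    have e2 : (A * B - B * A) * A = E * A := by rw [h1]
    have : A * (A * B - B * A) + (A * B - B * A) * A = A * E + E * A := by rw [e1, e2]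
    rw [h2] at this
    calc A ^ 2 * B - B * A ^ 2
        = A * (A * B - B * A) + (A * B - B * A) * A := by noncomm_ring
      _ = A := this
  have k2 : A * B ^ 2 - B ^ 2 * A = B := by
    have e1 : B * (A * B - B * A) = B * E := by rw [h1]
    have e2 : (A * B - B * A) * B = E * B := by rw [h1]
    have : (A * B - B * A) * B + B * (A * B - B * A) = B * E + E * B := by
      rw [e1, e2]; abel
    rw [h3] at this
    calc A * B ^ 2 - B ^ 2 * A
        = (A * B - B * A) * B + B * (A * B - B * A) := by noncomm_ring
      _ = B := this
  refine ⟨?_, ?_, ?_⟩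
  · have : A * (A ^ 2 * B - B * A ^ 2) + (A ^ 2 * B - B * A ^ 2) * A = A * A + A * A := by
      rw [k1]
    calc (-(A * B + B * A)) * A ^ 2 - A ^ 2 * (-(A * B + B * A))
        = A * (A ^ 2 * B - B * A ^ 2) + (A ^ 2 * B - B * A ^ 2) * A := by noncomm_ring
      _ = A * A + A * A := this
      _ = 2 • (A ^ 2) := by rw [two_smul]; noncomm_ring
  · have : B * (A * B ^ 2 - B ^ 2 * A) + (A * B ^ 2 - B ^ 2 * A) * B = B * B + B * B := by
      rw [k2]
    calc (-(A * B + B * A)) * (-(B ^ 2)) - (-(B ^ 2)) * (-(A * B + B * A))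
        = B * (A * B ^ 2 - B ^ 2 * A) + (A * B ^ 2 - B ^ 2 * A) * B := by noncomm_ring
      _ = B * B + B * B := this
      _ = (-2 : ℤ) • (-(B ^ 2)) := by
          rw [neg_smul, smul_neg, neg_neg, two_zsmul]; noncomm_ring
  · have : A * (A * B ^ 2 - B ^ 2 * A) + (A * B ^ 2 - B ^ 2 * A) * A = A * B + B * A := by
      rw [k2]
    calc A ^ 2 * (-(B ^ 2)) - (-(B ^ 2)) * A ^ 2
        = -(A * (A * B ^ 2 - B ^ 2 * A) + (A * B ^ 2 - B ^ 2 * A) * A) := by noncomm_ring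
      _ = -(A * B + B * A) := by rw [this]
end

section
/- Let A, B, E be endomorphisms of a K-vector space V satisfying AB - BA = E, AE + EA = A, BE + EB = B, E² = E, and set e := A², f := -B², H := -(AB+BA). Then [H, E] = 0, [e, E] = 0, [f, E] = 0, [e, A] = 0, [f, B] = 0, [e, B] = A, and [f, A] = B. -/
theorem stmt_2 (K : Type*) [Field K] [CharZero K]
    (V : Type*) [AddCommGroup V] [Module K V]
    (A B E : Module.End K V)
    (h1 : A * B - B * A = E) (h2 : A * E + E * A = A)
    (h3 : B * E + E * B = B) (h4 : E * E = E) :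
    (-(A * B + B * A)) * E - E * (-(A * B + B * A)) = 0 ∧
    A ^ 2 * E - E * A ^ 2 = 0 ∧
    (-(B ^ 2)) * E - E * (-(B ^ 2)) = 0 ∧
    A ^ 2 * A - A * A ^ 2 = 0 ∧
    (-(B ^ 2)) * B - B * (-(B ^ 2)) = 0 ∧
    A ^ 2 * B - B * A ^ 2 = A ∧
    (-(B ^ 2)) * A - A * (-(B ^ 2)) = B := by
  refine ⟨?_, ?_, ?_, by noncomm_ring, by noncomm_ring, ?_, ?_⟩
  · have g : (-(A * B + B * A)) * E - E * (-(A * B + B * A)) =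
      ((A * E + E * A) * B - A * (B * E + E * B))
      + ((B * E + E * B) * A - B * (A * E + E * A)) := by noncomm_ring
    rw [g, h2, h3]; noncomm_ring
  · have g : A ^ 2 * E - E * A ^ 2 = A * (A * E + E * A) - (A * E + E * A) * A := by
      noncomm_ring
    rw [g, h2]; noncomm_ring
  · have g : (-(B ^ 2)) * E - E * (-(B ^ 2)) =
      (B * E + E * B) * B - B * (B * E + E * B) := by noncomm_ring
    rw [g, h3]; noncomm_ring
  · have g : A ^ 2 * B - B * A ^ 2 = A * (A * B - B * A) + (A * B - B * A) * A := by
      noncomm_ring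
    rw [g, h1, h2]
  · have g : (-(B ^ 2)) * A - A * (-(B ^ 2)) = (A * B - B * A) * B + B * (A * B - B * A) := by
      noncomm_ring
    rw [g, h1, add_comm]; exact h3
end

section
/- Let A, B, E be endomorphisms of a K-vector space V satisfying the asl₂ relations AB - BA = E, AE + EA = A, BE + EB = B, E² = E. Set C := EF' + F'E' + (1/2)(H² + AB - BA) where E' := A², F' := -B², H := -(AB+BA). Then C = 0 as an endomorphism of V. (I.e., the osp(1|2) Casimir E'F' + F'E' + (1/2)(H² + E) acts trivially on any asl₂-representation.) -/
theorem stmt_4 (K : Type*) [Field K] [CharZero K]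
    (V : Type*) [AddCommGroup V] [Module K V]
    (A B E : Module.End K V)
    (h1 : A * B - B * A = E) (h2 : A * E + E * A = A)
    (h3 : B * E + E * B = B) (h4 : E * E = E) :
    A ^ 2 * (-(B ^ 2)) + (-(B ^ 2)) * A ^ 2 +
      ((2 : K)⁻¹) • ((-(A * B + B * A)) ^ 2 + (A * B - B * A)) = 0 := by
  have h5 : A * A * B = B * (A * A) + A := by
    linear_combination (norm := noncomm_ring) h2 + A * h1 + h1 * A
  have h6 : A * (B * B) = B * B * A + B := by
    linear_combination (norm := noncomm_ring) h3 + B * h1 + h1 * B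
  have h7 : A * A * (B * B) = B * B * (A * A) + A * B + B * A := by
    linear_combination (norm := noncomm_ring) h5 * B + B * h5
  have e2 : A * (B * B) * A = B * B * (A * A) + B * A := by
    linear_combination (norm := noncomm_ring) h6 * A
  have e3 : B * (A * A) * B = B * B * (A * A) + B * A := by
    linear_combination (norm := noncomm_ring) B * h5
  have e4 : B * A * (B * A) = B * B * (A * A) + B * A - E * (B * A) := by
    linear_combination (norm := noncomm_ring) B * h1 * A + h3 * A
  have e1 : A * B * (A * B) = B * B * (A * A) + B * A + E * (B * A) + E := by
    linear_combination (norm := noncomm_ring) h1 * (A * B) + e3 + E * h1 + h4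
  have key : (-(A * B + B * A)) ^ 2 + (A * B - B * A) =
      2 * (A ^ 2 * B ^ 2 + B ^ 2 * A ^ 2) := by
    linear_combination (norm := noncomm_ring) e1 + e2 + e3 + e4 - 2 * h7 - h1
  have key' : (-(A * B + B * A)) ^ 2 + (A * B - B * A) =
      (2 : K) • (A ^ 2 * B ^ 2 + B ^ 2 * A ^ 2) := by
    rw [key, two_mul, ← two_smul K]
  rw [key', smul_smul, inv_mul_cancel₀ (two_ne_zero), one_smul]
  noncomm_ring
end

section
/- Let A, B, E be endomorphisms of a K-vector space V satisfying AB - BA = E, AE + EA = A, BE + EB = B, E² = E, and H = -(AB+BA). Suppose v ∈ V satisfies Hv = ℓ·v and Ev = i·v with i ∈ {0,1} (v homogeneous of parity i). Then for all k ≥ 1, A(Bᵏv) = λₖ·Bᵏ⁻¹v, where λₖ = ⌊(k-i)/2⌋ + (i-ℓ)/2. -/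
theorem stmt_6 (K : Type*) [Field K] [CharZero K]
    (V : Type*) [AddCommGroup V] [Module K V]
    (A B E : Module.End K V)
    (h1 : A * B - B * A = E) (h2 : A * E + E * A = A)
    (h3 : B * E + E * B = B) (h4 : E * E = E)
    (H : Module.End K V) (hH : H = -(A * B + B * A))
    (v : V) (ℓ : K) (i : ℕ) (hi : i = 0 ∨ i = 1)
    (hv : H v = ℓ • v) (he : E v = (i : K) • v) :
    ∀ k : ℕ, 1 ≤ k →
      A ((B ^ k) v) =
        (((Int.fdiv ((k : ℤ) - (i : ℤ)) 2 : ℤ) : K) + ((i : K) - ℓ) / 2) • (B ^ (k - 1)) v := by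
  have hEB : ∀ w : V, E (B w) = B w - B (E w) := by
    intro w
    have h := LinearMap.congr_fun h3 w
    simp only [LinearMap.add_apply, Module.End.mul_apply] at h
    rw [eq_sub_iff_add_eq, add_comm]; exact h
  -- parity lemma
  have hpar : ∀ m : ℕ, E ((B ^ m) v) = (((i + m) % 2 : ℕ) : K) • (B ^ m) v := by
    intro m
    induction m with
    | zero =>
      simp only [pow_zero, Module.End.one_apply, Nat.add_zero]
      rcases hi with h | h <;> subst h <;> simpa using he
    | succ m ih =>
      have hb : (B ^ (m + 1)) v = B ((B ^ m) v) := by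
        rw [pow_succ']; rfl
      rw [hb, hEB, ih, map_smul]
      have hc : ((i + m) % 2 : ℕ) + ((i + (m + 1)) % 2 : ℕ) = 1 := by omega
      have hcK : (((i + (m + 1)) % 2 : ℕ) : K) = 1 - (((i + m) % 2 : ℕ) : K) := by
        have h' := congrArg (Nat.cast : ℕ → K) hc
        push_cast at h'
        linear_combination h'
      rw [hcK, sub_smul, one_smul]
  -- A(Bv)
  have hABv : A (B v) = (((i : K) - ℓ) / 2) • v := by
    have hE := LinearMap.congr_fun h1 v
    simp only [LinearMap.sub_apply, Module.End.mul_apply] at hE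
    rw [he] at hE
    have hHv := hv
    rw [hH] at hHv
    simp only [LinearMap.neg_apply, LinearMap.add_apply, Module.End.mul_apply] at hHv
    -- hE : A (B v) - B (A v) = i • v;  hHv : -(A (B v) + B (A v)) = ℓ • v
    have h2s : A (B v) + A (B v) = ((i : K) - ℓ) • v := by
      have hsum : A (B v) + B (A v) = -(ℓ • v) := by
        rw [← hHv]; abel
      have : A (B v) + A (B v) = (A (B v) - B (A v)) + (A (B v) + B (A v)) := by abel
      rw [this, hE, hsum, sub_smul, sub_eq_add_neg]
    have h2smul : (2 : K) • A (B v) = ((i : K) - ℓ) • v := by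
      rw [two_smul]; exact h2s
    have := congrArg (fun w => (2 : K)⁻¹ • w) h2smul
    simpa [inv_smul_smul₀ (two_ne_zero (α := K)), smul_smul, div_eq_inv_mul] using this
  intro k hk
  induction k, hk using Nat.le_induction with
  | base =>
    have hfd : Int.fdiv ((1 : ℤ) - (i : ℤ)) 2 = 0 := by
      rcases hi with h | h <;> subst h <;> decide
    simpa [hfd] using hABv
  | succ k hk ih =>
    have hb : (B ^ (k + 1)) v = B ((B ^ k) v) := by rw [pow_succ']; rfl
    have hAB : ∀ w : V, A (B w) = B (A w) + E w := by
      intro w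
      have h := LinearMap.congr_fun h1 w
      simp only [LinearMap.sub_apply, Module.End.mul_apply] at h
      rw [← h]; abel
    have hBB : B ((B ^ (k - 1)) v) = (B ^ k) v := by
      conv_rhs => rw [show k = (k - 1) + 1 by omega, pow_succ']
      rfl
    rw [hb, hAB, ih, map_smul, hBB, hpar k, Nat.add_sub_cancel]
    rw [← add_smul]
    congr 1
    have hint : Int.fdiv (((k + 1 : ℕ) : ℤ) - (i : ℤ)) 2
        = Int.fdiv ((k : ℤ) - (i : ℤ)) 2 + (((i + k) % 2 : ℕ) : ℤ) := by
      rw [Int.fdiv_eq_ediv_of_nonneg _ (by norm_num), Int.fdiv_eq_ediv_of_nonneg _ (by norm_num)]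
      omega
    have hK : ((Int.fdiv (((k + 1 : ℕ) : ℤ) - (i : ℤ)) 2 : ℤ) : K)
        = ((Int.fdiv ((k : ℤ) - (i : ℤ)) 2 : ℤ) : K) + (((i + k) % 2 : ℕ) : K) := by
      rw [hint, Int.cast_add, Int.cast_natCast]
    rw [hK]; ring
end

section
/- Let A, B, E be endomorphisms of a K-vector space V satisfying AB - BA = E, AE + EA = A, BE + EB = B, E² = E, and H = -(AB+BA). Suppose v ∈ V satisfies Hv = ℓ·v and Ev = i·v with i ∈ {0,1}. Then for all k ≥ 1, B(Aᵏv) = μₖ·Aᵏ⁻¹v, where μₖ = -⌊(k-i)/2⌋ - (i+ℓ)/2. -/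
theorem stmt_7 (K : Type*) [Field K] [CharZero K]
    (V : Type*) [AddCommGroup V] [Module K V]
    (A B E : Module.End K V)
    (h1 : A * B - B * A = E) (h2 : A * E + E * A = A)
    (h3 : B * E + E * B = B) (h4 : E * E = E)
    (H : Module.End K V) (hH : H = -(A * B + B * A))
    (v : V) (ℓ : K) (i : ℕ) (hi : i = 0 ∨ i = 1)
    (hv : H v = ℓ • v) (he : E v = (i : K) • v) :
    ∀ k : ℕ, 1 ≤ k →
      B ((A ^ k) v) =
        (-((Int.fdiv ((k : ℤ) - (i : ℤ)) 2 : ℤ) : K) - ((i : K) + ℓ) / 2) • (A ^ (k - 1)) v := by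
  -- E acts on A^k v by the parity (i+k) % 2
  have hE : ∀ k : ℕ, E ((A ^ k) v) = (((i + k) % 2 : ℕ) : K) • (A ^ k) v := by
    intro k
    induction k with
    | zero =>
      simpa [Nat.mod_eq_of_lt (by omega : i < 2)] using he
    | succ n ih =>
      have hEA : E * A = A - A * E := by rw [eq_sub_iff_add_eq, add_comm]; exact h2
      have step : E ((A ^ (n+1)) v) = A ((A ^ n) v) - A (E ((A ^ n) v)) := by
        have := congrArg (fun (T : Module.End K V) => T ((A ^ n) v)) hEA
        simp only [Module.End.mul_apply, LinearMap.sub_apply] at this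
        rw [pow_succ', Module.End.mul_apply]
        exact this
      rw [step, ih, map_smul]
      have hApow : A ((A ^ n) v) = (A ^ (n+1)) v := by
        rw [pow_succ', Module.End.mul_apply]
      rw [hApow]
      rcases Nat.mod_two_eq_zero_or_one (i + n) with hp | hp
      · have hp' : (i + (n+1)) % 2 = 1 := by omega
        rw [hp, hp']
        push_cast
        module
      · have hp' : (i + (n+1)) % 2 = 0 := by omega
        rw [hp, hp']
        push_cast
        module
  -- Base computation: B (A v)
  have e1 : A (B v) - B (A v) = (i : K) • v := by
    have := congrArg (fun (T : Module.End K V) => T v) h1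
    simp only [Module.End.mul_apply, LinearMap.sub_apply] at this
    rw [this, he]
  have e2 : A (B v) + B (A v) = -(ℓ • v) := by
    have hv' := hv
    rw [hH] at hv'
    simp only [LinearMap.neg_apply, LinearMap.add_apply, Module.End.mul_apply] at hv'
    exact neg_eq_iff_eq_neg.mp hv'
  have e3 : B (A v) = ((-ℓ - (i : K))/2) • v := by
    have h2s : (2 : K) • B (A v) = (-ℓ - (i : K)) • v := by
      have hd : B (A v) + B (A v) = (A (B v) + B (A v)) - (A (B v) - B (A v)) := by abel
      rw [e2, e1] at hd
      rw [two_smul, hd]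
      module
    calc B (A v) = ((2 : K)⁻¹ * 2) • B (A v) := by norm_num
      _ = (2 : K)⁻¹ • ((2 : K) • B (A v)) := by rw [mul_smul]
      _ = (2 : K)⁻¹ • ((-ℓ - (i : K)) • v) := by rw [h2s]
      _ = ((-ℓ - (i : K))/2) • v := by rw [smul_smul]; ring_nf
  intro k hk
  induction k, hk using Nat.le_induction with
  | base =>
    simp only [pow_one, Nat.sub_self, pow_zero, Module.End.one_apply]
    rw [e3]
    have hf : Int.fdiv ((1 : ℤ) - (i : ℤ)) 2 = 0 := by
      rcases hi with h | h <;> subst h <;> decide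
    rw [show ((1 : ℕ) : ℤ) = (1 : ℤ) by norm_num, hf]
    congr 1
    push_cast
    ring
  | succ n hn ih =>
    simp only [Nat.add_sub_cancel]
    have hBA : B * A = A * B - E := by rw [← h1]; abel
    have key : B ((A ^ (n+1)) v) = A (B ((A ^ n) v)) - E ((A ^ n) v) := by
      have := congrArg (fun (T : Module.End K V) => T ((A ^ n) v)) hBA
      simp only [Module.End.mul_apply, LinearMap.sub_apply] at this
      rw [pow_succ', Module.End.mul_apply]
      exact this
    rw [key, ih, hE n, map_smul]
    have hApow : A ((A ^ (n-1)) v) = (A ^ n) v := by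
      rw [← Module.End.mul_apply, ← pow_succ', Nat.sub_add_cancel hn]
    rw [hApow, ← sub_smul]
    congr 1
    have harg : ((n+1 : ℕ) : ℤ) - (i : ℤ) = ((n : ℤ) - (i : ℤ)) + 1 := by
      push_cast; ring
    rw [harg]
    have hf : Int.fdiv (((n : ℤ) - (i : ℤ)) + 1) 2
        = Int.fdiv ((n : ℤ) - (i : ℤ)) 2 + (((i+n) % 2 : ℕ) : ℤ) := by
      rw [Int.fdiv_eq_ediv_of_nonneg _ (by norm_num), Int.fdiv_eq_ediv_of_nonneg _ (by norm_num)]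
      rcases hi with h | h <;> subst h <;> push_cast <;> omega
    rw [hf, Int.cast_add, Int.cast_natCast]
    ring
end

section
/- The Lie antialgebra asl₂ has no nontrivial finite-dimensional representations: if V is a finite-dimensional vector space over ℂ and A, B, E ∈ End(V) satisfy AB - BA = E, AE + EA = A, BE + EB = B, E² = E, and V is irreducible (V has no proper nonzero subspace invariant under A, B, and E), then A = B = E = 0 and dim V ≤ 1. -/
/-!
`E = AB - BA` is a commutator, so its trace vanishes; being idempotent, its trace is its rank,
hence `E = 0`. The relations `AE + EA = A` and `BE + EB = B` then force `A = B = 0`, so every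
subspace is invariant and irreducibility leaves room for at most one dimension.
-/

open Module

theorem finrank_le_one_of_forall_eq_bot_or_eq_top {K V : Type*} [DivisionRing K]
    [AddCommGroup V] [Module K V] (h : ∀ W : Submodule K V, W = ⊥ ∨ W = ⊤) :
    finrank K V ≤ 1 := by
  rcases subsingleton_or_nontrivial V with _ | _
  · simp [finrank_zero_of_subsingleton]
  · have : IsSimpleModule K V := { eq_bot_or_eq_top := h }
    exact (isSimpleModule_iff_finrank_eq_one.mp this).le

theorem stmt_9 (V : Type*) [AddCommGroup V] [Module ℂ V] [FiniteDimensional ℂ V]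
    (A B E : Module.End ℂ V)
    (h1 : A * B - B * A = E) (h2 : A * E + E * A = A)
    (h3 : B * E + E * B = B) (h4 : E * E = E)
    (hirr : ∀ W : Submodule ℂ V,
      (∀ v ∈ W, A v ∈ W) → (∀ v ∈ W, B v ∈ W) → (∀ v ∈ W, E v ∈ W) →
      W = ⊥ ∨ W = ⊤) :
    A = 0 ∧ B = 0 ∧ E = 0 ∧ Module.finrank ℂ V ≤ 1 := by
  have hE : E = 0 := LinearMap.IsIdempotentElem.eq_zero_of_trace_eq_zero h4 <| by
    rw [← h1, ← Ring.lie_def, LinearMap.trace_lie]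
  have hA : A = 0 := by simpa [hE] using h2.symm
  have hB : B = 0 := by simpa [hE] using h3.symm
  refine ⟨hA, hB, hE, finrank_le_one_of_forall_eq_bot_or_eq_top fun W => hirr W ?_ ?_ ?_⟩ <;>
    simp [hA, hB, hE]
end

section
/- Let ℓ ∈ ℂ not be an odd integer, and let V(ℓ) be the representation with basis {eₖ}ₖ∈ℤ, A·eₖ = eₖ₊₁, B·eₖ = ((1-ℓ)/2 - ⌊k/2⌋)·eₖ₋₁. Then V(ℓ) is irreducible: any nonzero subspace of V(ℓ) invariant under both A and B equals V(ℓ). -/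
/-!
Since `⌊k/2⌋ + ⌊(k+1)/2⌋ = k`, the operator `AB + BA` is diagonal in the basis `eₖ`, with the
pairwise distinct eigenvalues `1 - ℓ - k`. Applying a suitable polynomial in `AB + BA` to a nonzero
vector of an invariant subspace `W` therefore isolates a multiple of some `eₖ` inside `W`. As `ℓ` is
not an odd integer, no coefficient of `B` vanishes, so `A` and `B` carry `eₖ` to every `eₙ`.
-/

/-- The shift operator `A` on the space `V(ℓ) = ℤ →₀ K`, `A eₖ = eₖ₊₁`. -/
noncomputable def aslA (K : Type*) [Field K] : Module.End K (ℤ →₀ K) :=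
  Finsupp.lsum K fun k => (LinearMap.id : K →ₗ[K] K).smulRight (Finsupp.single (k + 1) (1 : K))

/-- The operator `B` on `V(ℓ)`, `B eₖ = ((1-ℓ)/2 - ⌊k/2⌋) eₖ₋₁`. -/
noncomputable def aslB (K : Type*) [Field K] (ℓ : K) : Module.End K (ℤ →₀ K) :=
  Finsupp.lsum K fun k => (LinearMap.id : K →ₗ[K] K).smulRight
    ((((1 : K) - ℓ) / 2 - ((Int.fdiv k 2 : ℤ) : K)) • Finsupp.single (k - 1) (1 : K))

open Polynomial Finsupp

section Diagonal

variable {ι K : Type*} [Field K]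

theorem Finsupp.apply_eq_mul_of_map_single {f : Module.End K (ι →₀ K)} {d : ι → K}
    (hf : ∀ i x, f (single i x) = single i (d i * x)) (v : ι →₀ K) (i : ι) :
    f v i = d i * v i := by
  classical
  induction v using Finsupp.induction_linear with
  | zero => simp
  | add v w hv hw => simp [hv, hw, mul_add]
  | single j x => by_cases h : j = i <;> simp [hf, h]

theorem Finsupp.aeval_apply_of_apply_eq_mul {f : Module.End K (ι →₀ K)} {d : ι → K}
    (hf : ∀ v i, f v i = d i * v i) (p : K[X]) (v : ι →₀ K) (i : ι) :
    aeval f p v i = p.eval (d i) * v i := by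
  induction p using Polynomial.induction_on with
  | C a => simp [Module.algebraMap_end_apply]
  | add p q hp hq => simp [hp, hq, add_mul]
  | monomial n a h =>
    rw [pow_succ', mul_left_comm, map_mul, Module.End.mul_apply, aeval_X, hf, h]
    simp only [eval_mul, eval_C, eval_pow, eval_X]
    ring

theorem Finsupp.single_mem_of_apply_eq_mul {W : Submodule K (ι →₀ K)}
    {f : Module.End K (ι →₀ K)} {d : ι → K} (hd : Function.Injective d)
    (hf : ∀ v i, f v i = d i * v i) (hW : ∀ v ∈ W, f v ∈ W) {v : ι →₀ K} (hv : v ∈ W)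
    (i : ι) : single i (v i) ∈ W := by
  classical
  -- `p(f)` kills every component of `v` except the `i`-th one.
  set p : K[X] := ∏ j ∈ v.support.erase i, (X - C (d j))
  have hpi : p.eval (d i) ≠ 0 := by
    simp only [p, eval_prod, eval_sub, eval_X, eval_C]
    exact Finset.prod_ne_zero_iff.mpr fun j hj ↦
      sub_ne_zero.mpr (hd.ne (Finset.ne_of_mem_erase hj).symm)
  have hpv : aeval f p v = p.eval (d i) • single i (v i) := by
    ext m
    rw [aeval_apply_of_apply_eq_mul hf, smul_apply, smul_eq_mul, single_apply]
    by_cases hm : i = m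
    · simp [hm]
    by_cases hmv : m ∈ v.support
    · have : p.eval (d m) = 0 := by
        simp only [p, eval_prod, eval_sub, eval_X, eval_C]
        exact Finset.prod_eq_zero (Finset.mem_erase.mpr ⟨Ne.symm hm, hmv⟩) (sub_self _)
      simp [this, hm]
    · simp [notMem_support_iff.mp hmv, hm]
  have := aeval_apply_smul_mem_of_le_comap hv p f hW
  rwa [hpv, W.smul_mem_iff hpi] at this

end Diagonal

section Representation

variable {K : Type*} [Field K]

theorem aslA_single (k : ℤ) (x : K) : aslA K (single k x) = single (k + 1) x := by
  simp [aslA]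

def aslCoeff (ℓ : K) (k : ℤ) : K := (1 - ℓ) / 2 - (Int.fdiv k 2 : K)

theorem aslB_single (ℓ : K) (k : ℤ) (x : K) :
    aslB K ℓ (single k x) = single (k - 1) (aslCoeff ℓ k * x) := by
  rw [aslB, lsum_single, LinearMap.smulRight_apply, LinearMap.id_apply, smul_smul, smul_single,
    smul_eq_mul, mul_one, mul_comm, aslCoeff]

theorem aslCoeff_add_aslCoeff_add_one [CharZero K] (ℓ : K) (k : ℤ) :
    aslCoeff ℓ k + aslCoeff ℓ (k + 1) = 1 - ℓ - k := by
  have h : Int.fdiv k 2 + Int.fdiv (k + 1) 2 = k := by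
    rw [Int.fdiv_eq_ediv_of_nonneg _ zero_le_two, Int.fdiv_eq_ediv_of_nonneg _ zero_le_two]
    omega
  have h' : (Int.fdiv k 2 : K) + Int.fdiv (k + 1) 2 = k := by exact_mod_cast h
  rw [aslCoeff, aslCoeff]
  linear_combination -h'

theorem aslCoeff_ne_zero [CharZero K] {ℓ : K} (hℓ : ¬ ∃ n : ℤ, ℓ = 2 * (n : K) + 1) (k : ℤ) :
    aslCoeff ℓ k ≠ 0 := by
  refine fun h ↦ hℓ ⟨-Int.fdiv k 2, ?_⟩
  rw [aslCoeff] at h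
  push_cast
  linear_combination -2 * h

theorem aslA_mul_aslB_add_aslB_mul_aslA_single [CharZero K] (ℓ : K) (k : ℤ) (x : K) :
    (aslA K * aslB K ℓ + aslB K ℓ * aslA K) (single k x) = single k ((1 - ℓ - k) * x) := by
  simp only [LinearMap.add_apply, Module.End.mul_apply, aslA_single, aslB_single,
    sub_add_cancel, add_sub_cancel_right, ← single_add, ← add_mul, aslCoeff_add_aslCoeff_add_one]

theorem Submodule.eq_top_of_single_mem_of_aslA_of_aslB [CharZero K] {ℓ : K}
    (hℓ : ¬ ∃ n : ℤ, ℓ = 2 * (n : K) + 1) {W : Submodule K (ℤ →₀ K)}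
    (hA : ∀ v ∈ W, aslA K v ∈ W) (hB : ∀ v ∈ W, aslB K ℓ v ∈ W) {k : ℤ} {x : K} (hx : x ≠ 0)
    (hk : single k x ∈ W) : W = ⊤ := by
  have hsingle (n : ℤ) : single n x ∈ W := by
    induction n using Int.inductionOn' (b := k) with
    | zero => exact hk
    | succ n _ hn => simpa [aslA_single] using hA _ hn
    | pred n _ hn =>
      have := W.smul_mem (aslCoeff ℓ n)⁻¹ (hB _ hn)
      rwa [aslB_single, smul_single, smul_eq_mul, inv_mul_cancel_left₀ (aslCoeff_ne_zero hℓ n)]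
        at this
  rw [eq_top_iff, ← Finsupp.basisSingleOne.span_eq, Submodule.span_le]
  rintro _ ⟨n, rfl⟩
  simpa [smul_single, hx] using W.smul_mem x⁻¹ (hsingle n)

end Representation

theorem stmt_13 (ℓ : ℂ) (hℓ : ¬ ∃ n : ℤ, ℓ = 2 * (n : ℂ) + 1)
    (W : Submodule ℂ (ℤ →₀ ℂ)) (hW : W ≠ ⊥)
    (hA : ∀ v ∈ W, aslA ℂ v ∈ W) (hB : ∀ v ∈ W, aslB ℂ ℓ v ∈ W) :
    W = ⊤ := by
  obtain ⟨v, hv, hv0⟩ := W.exists_mem_ne_zero_of_ne_bot hW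
  obtain ⟨k, hk⟩ : ∃ k, v k ≠ 0 := by simpa [Finsupp.ext_iff] using hv0
  have hdiag := apply_eq_mul_of_map_single (aslA_mul_aslB_add_aslB_mul_aslA_single ℓ)
  have hinj : Function.Injective fun k : ℤ ↦ 1 - ℓ - k :=
    sub_right_injective.comp Int.cast_injective
  have hAB : ∀ v ∈ W, (aslA ℂ * aslB ℂ ℓ + aslB ℂ ℓ * aslA ℂ) v ∈ W :=
    fun w hw ↦ W.add_mem (hA _ (hB w hw)) (hB _ (hA w hw))
  exact W.eq_top_of_single_mem_of_aslA_of_aslB hℓ hA hB hk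
    (single_mem_of_apply_eq_mul hinj hdiag hAB hv k)
end

section
/- For ℓ, ℓ' ∈ ℂ not odd integers with ℓ' = ℓ + 2m for some m ∈ ℤ, the map Φ: V(ℓ') → V(ℓ) defined by Φ(e'ₖ) = eₖ₊₂ₘ is an isomorphism of representations, i.e., Φ is a linear bijection satisfying Φ∘A' = A∘Φ and Φ∘B' = B∘Φ. -/
theorem stmt_14 (ℓ ℓ' : ℂ)
    (hℓ : ¬ ∃ n : ℤ, ℓ = 2 * (n : ℂ) + 1) (hℓ' : ¬ ∃ n : ℤ, ℓ' = 2 * (n : ℂ) + 1)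
    (m : ℤ) (hm : ℓ' = ℓ + 2 * (m : ℂ))
    (Φ : (ℤ →₀ ℂ) →ₗ[ℂ] (ℤ →₀ ℂ))
    (hΦ : Φ = Finsupp.lmapDomain ℂ ℂ (fun k : ℤ => k + 2 * m)) :
    Function.Bijective Φ ∧
    Φ ∘ₗ aslA ℂ = aslA ℂ ∘ₗ Φ ∧
    Φ ∘ₗ aslB ℂ ℓ' = aslB ℂ ℓ ∘ₗ Φ := by
  subst hΦ
  refine ⟨?_, ?_, ?_⟩
  · refine Function.bijective_iff_has_inverse.mpr
      ⟨Finsupp.mapDomain (fun k : ℤ => k - 2 * m), ?_, ?_⟩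
    · intro x
      rw [Finsupp.lmapDomain_apply, ← Finsupp.mapDomain_comp (v := x),
        show ((fun k : ℤ => k - 2 * m) ∘ (fun k : ℤ => k + 2 * m)) = id from
          funext fun k => by simp, Finsupp.mapDomain_id]
    · intro x
      rw [Finsupp.lmapDomain_apply, ← Finsupp.mapDomain_comp (v := x),
        show ((fun k : ℤ => k + 2 * m) ∘ (fun k : ℤ => k - 2 * m)) = id from
          funext fun k => by simp, Finsupp.mapDomain_id]
  · apply Finsupp.lhom_ext
    intro k c
    simp only [aslA, LinearMap.comp_apply, Finsupp.lsum_single, LinearMap.smulRight_apply,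
      LinearMap.id_apply, Finsupp.lmapDomain_apply, Finsupp.mapDomain_single,
      Finsupp.mapDomain_smul]
    congr 1
    ring
  · apply Finsupp.lhom_ext
    intro k c
    have h1 : Int.fdiv (k + 2 * m) 2 = Int.fdiv k 2 + m := by
      rw [Int.fdiv_eq_ediv_of_nonneg _ (by norm_num), Int.fdiv_eq_ediv_of_nonneg _ (by norm_num),
        mul_comm, Int.add_mul_ediv_right _ _ (by norm_num)]
    simp only [aslB, LinearMap.comp_apply, Finsupp.lsum_single, LinearMap.smulRight_apply,
      LinearMap.id_apply, Finsupp.lmapDomain_apply, Finsupp.mapDomain_single,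
      Finsupp.mapDomain_smul, Finsupp.smul_single, h1, hm]
    rw [show k + 2 * m - 1 = k - 1 + 2 * m from by ring]
    congr 1
    push_cast
    ring
end

section
/- Under the hypotheses of the tensor-product construction (A, B, E on V and A', B', E' on W satisfying the asl₂ relations; Ã = A⊗Id + Id⊗A', B̃ = B⊗Id + Id⊗B', Ẽ = ÃB̃ - B̃Ã, with all tensor operators taken with Koszul signs built into the relations via A, B odd), one has Ẽ² = Ẽ + 4C̄, where C̄ = E₁⊗F₂ + F₁⊗E₂ + (1/2)(H₁⊗H₂ + A⊗B' - B⊗A'), with E₁ = A², F₁ = -B², H₁ = -(AB+BA) on V and E₂ = A'², F₂ = -B'², H₂ = -(A'B'+B'A') on W, assuming additionally the cross-terms satisfy the graded commutation rules (A⊗Id anticommutes with Id⊗A', Id⊗B', and similar Koszul-sign conventions). -/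
open TensorProduct

theorem stmt_18 (K : Type*) [Field K] [CharZero K]
    (V W : Type*) [AddCommGroup V] [Module K V] [AddCommGroup W] [Module K W]
    (A B E : Module.End K V)
    (h1 : A * B - B * A = E) (h2 : A * E + E * A = A)
    (h3 : B * E + E * B = B) (h4 : E * E = E)
    (A' B' E' : Module.End K W)
    (h1' : A' * B' - B' * A' = E') (h2' : A' * E' + E' * A' = A')
    (h3' : B' * E' + E' * B' = B') (h4' : E' * E' = E')
    -- σ is the grading involution of V = V₀ ⊕ V₁ : the odd operators A, B
    -- anticommute with it, so that `map σ X` realizes the Koszul sign rule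
    -- for `Id ⊗ X` with `X` odd.
    (σ : Module.End K V) (hσ2 : σ * σ = 1)
    (hσA : σ * A = -(A * σ)) (hσB : σ * B = -(B * σ)) (hσE : σ * E = E * σ)
    (Atil Btil Etil Cbar : Module.End K (V ⊗[K] W))
    (hA : Atil = TensorProduct.map A LinearMap.id + TensorProduct.map σ A')
    (hB : Btil = TensorProduct.map B LinearMap.id + TensorProduct.map σ B')
    (hE : Etil = Atil * Btil - Btil * Atil)
    (hC : Cbar = TensorProduct.map (A ^ 2) (-(B' ^ 2)) +
        TensorProduct.map (-(B ^ 2)) (A' ^ 2) +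
        ((2 : K)⁻¹) • (TensorProduct.map (-(A * B + B * A)) (-(A' * B' + B' * A'))
          + TensorProduct.map (A * σ) B' - TensorProduct.map (B * σ) A')) :
    Etil * Etil = Etil + (4 : K) • Cbar := by
  have mneg1 : ∀ (f : Module.End K V) (g : Module.End K W),
      TensorProduct.map (-f) g = -TensorProduct.map f g := fun f g => by
    rw [← neg_one_smul K f, TensorProduct.map_smul_left]; module
  have mneg2 : ∀ (f : Module.End K V) (g : Module.End K W),
      TensorProduct.map f (-g) = -TensorProduct.map f g := fun f g => by
    rw [← neg_one_smul K g, TensorProduct.map_smul_right]; module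
  have msub1 : ∀ (f f' : Module.End K V) (g : Module.End K W),
      TensorProduct.map (f - f') g = TensorProduct.map f g - TensorProduct.map f' g :=
    fun f f' g => by
      rw [sub_eq_add_neg, TensorProduct.map_add_left, mneg1, sub_eq_add_neg]
  have msub2 : ∀ (f : Module.End K V) (g g' : Module.End K W),
      TensorProduct.map f (g - g') = TensorProduct.map f g - TensorProduct.map f g' :=
    fun f g g' => by
      rw [sub_eq_add_neg, TensorProduct.map_add_right, mneg2, sub_eq_add_neg]
  have hA2 : ∀ x : Module.End K V, σ * (A * x) = -(A * (σ * x)) := fun x => by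
    rw [← mul_assoc, hσA, neg_mul, mul_assoc]
  have hB2 : ∀ x : Module.End K V, σ * (B * x) = -(B * (σ * x)) := fun x => by
    rw [← mul_assoc, hσB, neg_mul, mul_assoc]
  have hE2 : ∀ x : Module.End K V, σ * (E * x) = E * (σ * x) := fun x => by
    rw [← mul_assoc, hσE, mul_assoc]
  have hσ22 : ∀ x : Module.End K V, σ * (σ * x) = x := fun x => by
    rw [← mul_assoc, hσ2, one_mul]
  -- normal form for Etil
  have hEtil : Etil = TensorProduct.map E 1
      + (TensorProduct.map (A * σ) B' + TensorProduct.map (A * σ) B')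
      - (TensorProduct.map (B * σ) A' + TensorProduct.map (B * σ) A')
      + TensorProduct.map 1 E' := by
    rw [hE, hA, hB, ← h1, ← h1', ← Module.End.one_eq_id, msub1, msub2]
    simp only [mul_add, add_mul, ← TensorProduct.map_mul, mul_assoc,
      hσA, hσB, hσ2, hA2, hB2, hσ22, mul_neg, neg_mul, neg_neg, mul_one, one_mul,
      mneg1, mneg2]
    abel
  -- auxiliary relations between atoms
  have hauxE : TensorProduct.map E E' = TensorProduct.map (A * B) (A' * B')
      - TensorProduct.map (A * B) (B' * A') - TensorProduct.map (B * A) (A' * B')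
      + TensorProduct.map (B * A) (B' * A') := by
    rw [← h1, ← h1', msub1, msub2, msub2]; abel
  have haux1 : TensorProduct.map (A * (E * σ)) B' + TensorProduct.map (E * (A * σ)) B'
      = TensorProduct.map (A * σ) B' := by
    rw [← TensorProduct.map_add_left, ← mul_assoc, ← mul_assoc, ← add_mul, h2]
  have haux2 : TensorProduct.map (A * σ) (B' * E') + TensorProduct.map (A * σ) (E' * B')
      = TensorProduct.map (A * σ) B' := by
    rw [← TensorProduct.map_add_right, h3']
  have haux3 : TensorProduct.map (B * (E * σ)) A' + TensorProduct.map (E * (B * σ)) A'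
      = TensorProduct.map (B * σ) A' := by
    rw [← TensorProduct.map_add_left, ← mul_assoc, ← mul_assoc, ← add_mul, h3]
  have haux4 : TensorProduct.map (B * σ) (A' * E') + TensorProduct.map (B * σ) (E' * A')
      = TensorProduct.map (B * σ) A' := by
    rw [← TensorProduct.map_add_right, h2']
  rw [hEtil, hC]
  simp only [pow_two]
  simp only [mul_add, add_mul, sub_mul, mul_sub, ← TensorProduct.map_mul, mul_assoc,
    hσA, hσB, hσE, hσ2, hA2, hB2, hE2, hσ22, mul_neg, neg_mul, neg_neg, mul_one, one_mul,
    h4, h4', mneg1, mneg2, smul_add, smul_sub, smul_smul,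
    TensorProduct.map_add_left, TensorProduct.map_add_right]
  linear_combination (norm := module) (2:K) • haux1 + (2:K) • haux2 - (2:K) • haux3 - (2:K) • haux4 + (2:K) • hauxE
end

section
/- Let A, B, E be endomorphisms of an infinite-dimensional ℂ-vector space V satisfying the asl₂ relations, with H := -(AB+BA). Suppose V is irreducible (no proper nonzero subspace invariant under A, B, E) and there is a nonzero v ∈ V with Ev = v, Hv = ℓv, and Av = 0 (a highest weight vector of odd parity). Then ℓ = -1, and the vectors Bᵏv for k ≥ 0 are all nonzero and linearly independent. -/
theorem stmt_19 (V : Type*) [AddCommGroup V] [Module ℂ V]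
    (hinf : ¬ FiniteDimensional ℂ V)
    (A B E : Module.End ℂ V)
    (h1 : A * B - B * A = E) (h2 : A * E + E * A = A)
    (h3 : B * E + E * B = B) (h4 : E * E = E)
    (hirr : ∀ W : Submodule ℂ V,
      (∀ v ∈ W, A v ∈ W) → (∀ v ∈ W, B v ∈ W) → (∀ v ∈ W, E v ∈ W) →
      W = ⊥ ∨ W = ⊤)
    (H : Module.End ℂ V) (hH : H = -(A * B + B * A))
    (v : V) (hv0 : v ≠ 0) (ℓ : ℂ)
    (hEv : E v = v) (hHv : H v = ℓ • v) (hAv : A v = 0) :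
    ℓ = -1 ∧ (∀ k : ℕ, (B ^ k) v ≠ 0) ∧
      LinearIndependent ℂ (fun k : ℕ => (B ^ k) v) := by
  have hABv : A (B v) = v := by
    have := congrArg (fun f : Module.End ℂ V => f v) h1
    simp only [LinearMap.sub_apply, Module.End.mul_apply, hAv, hEv, map_zero] at this
    simpa using this
  have hl : ℓ = -1 := by
    have h : ℓ • v = (-1 : ℂ) • v := by
      rw [← hHv, hH]
      simp [LinearMap.neg_apply, LinearMap.add_apply, Module.End.mul_apply, hAv, hABv]
    have hz : (ℓ - (-1)) • v = 0 := by rw [sub_smul, h, sub_self]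
    rcases smul_eq_zero.mp hz with h' | h'
    · exact sub_eq_zero.mp h'
    · exact absurd h' hv0
  -- commutation relation H B = B H - B
  have hcomm : A * B * B - B * B * A = B := by
    calc A * B * B - B * B * A
        = (A * B - B * A) * B + B * (A * B - B * A) := by noncomm_ring
      _ = E * B + B * E := by rw [h1]
      _ = B := by rw [add_comm]; exact h3
  have key : H * B = B * H - B := by
    rw [hH]
    calc -(A * B + B * A) * B
        = B * -(A * B + B * A) - (A * B * B - B * B * A) := by noncomm_ring
      _ = B * -(A * B + B * A) - B := by rw [hcomm]
  have hHB : ∀ w : V, H (B w) = B (H w) - B w := by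
    intro w
    have := congrArg (fun f : Module.End ℂ V => f w) key
    simpa [LinearMap.sub_apply, Module.End.mul_apply] using this
  -- eigenvalue computation
  have hHBk : ∀ k : ℕ, H ((B ^ k) v) = (-1 - (k : ℂ)) • (B ^ k) v := by
    intro k
    induction k with
    | zero => simpa [hl] using hHv
    | succ k ih =>
      have hc : (-1 - ((k + 1 : ℕ) : ℂ)) = (-1 - (k : ℂ)) - 1 := by push_cast; ring
      rw [pow_succ', Module.End.mul_apply, hHB, ih, map_smul, hc]; module
  -- E on B^k v
  have hEB : ∀ w : V, E (B w) = B w - B (E w) := by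
    intro w
    have := congrArg (fun f : Module.End ℂ V => f w) h3
    simp only [LinearMap.add_apply, Module.End.mul_apply] at this
    linear_combination (norm := abel) this
  have hEBk : ∀ k : ℕ, E ((B ^ k) v) =
      (if Even k then (1 : ℂ) else 0) • (B ^ k) v := by
    intro k
    induction k with
    | zero => simpa using hEv
    | succ k ih =>
      rw [pow_succ', Module.End.mul_apply, hEB, ih, map_smul]
      rcases Nat.even_or_odd k with hk | hk
      · simp [hk, Nat.even_add_one, Nat.not_even_iff_odd.mpr (Even.add_one hk)]
      · simp [Nat.not_even_iff_odd.mpr hk, Nat.even_add_one, pow_succ', Module.End.mul_apply]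
  -- nonvanishing
  have h2AB : A * B + A * B = E - H := by
    rw [hH, ← h1]; abel
  have hBk : ∀ k : ℕ, (B ^ k) v ≠ 0 := by
    intro k
    induction k with
    | zero => simpa using hv0
    | succ k ih =>
      intro h0
      have happ := congrArg (fun f : Module.End ℂ V => f ((B ^ k) v)) h2AB
      simp only [LinearMap.add_apply, LinearMap.sub_apply, Module.End.mul_apply] at happ
      have hB1 : B ((B ^ k) v) = (B ^ (k + 1)) v := by
        rw [pow_succ', Module.End.mul_apply]
      rw [hB1, h0, map_zero, hEBk, hHBk] at happ
      have hz : ((if Even k then (1 : ℂ) else 0) - (-1 - (k : ℂ))) • (B ^ k) v = 0 := by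
        rw [sub_smul, ← happ]; abel
      have hcne : ((if Even k then (1 : ℂ) else 0) - (-1 - (k : ℂ))) ≠ 0 := by
        have hk2 : ((k : ℂ) + 2) ≠ 0 := by
          exact_mod_cast Nat.cast_add_one_ne_zero (R := ℂ) (k + 1)
        have hk1 : ((k : ℂ) + 1) ≠ 0 := Nat.cast_add_one_ne_zero k
        split <;> [skip; skip] <;> intro hc <;> [exact hk2 (by linear_combination hc);
          exact hk1 (by linear_combination hc)]
      exact ih ((smul_eq_zero.mp hz).resolve_left hcne)
  refine ⟨hl, hBk, ?_⟩
  apply Module.End.eigenvectors_linearIndependent' H (fun k : ℕ => (-1 - (k : ℂ)))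
  · intro a b hab
    have : (a : ℂ) = b := by
      have := hab
      simp only at this
      linear_combination -this
    exact_mod_cast this
  · intro k
    exact ⟨Module.End.mem_eigenspace_iff.mpr (hHBk k), hBk k⟩
end
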